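/- arXiv:1605.04793 — 5 statements merged into one kernel-verified Lean document; each statement's English description precedes it below -/
import Mathlib

section
/- Let a, b : ℤ → ℝ be K-periodic sequences and Δx > 0. If (b_{k+1} − b_k)/Δx = (a_{k+1} + a_k)/2 for all k, then Σ_{k=1}^{K} a_k b_k = 0. -/
/-!
Write `a' = a (k + 1)`, `b' = b (k + 1)`. Polarisation gives
`2 (a' b' + a b) = (a' + a)(b' + b) + (a' - a)(b' - b)`, and the scheme turns both products into
differences of squares: `(a' + a)(b' + b) = (2 / Δx)(b'² - b²)` and
`(a' - a)(b' - b) = (Δx / 2)(a'² - a²)`. Summed over a period, the differences telescope to zero,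
while the left side becomes `4 ∑ a_k b_k`.
-/

open Finset

namespace Function.Periodic

variable {M : Type*} {g : ℤ → M} {K : ℕ}

theorem sum_Icc_comp_add_one [AddCancelCommMonoid M] (hg : Periodic g K) :
    ∑ k ∈ Icc (1 : ℤ) K, g (k + 1) = ∑ k ∈ Icc (1 : ℤ) K, g k := by
  have hle : (1 : ℤ) ≤ K + 1 := by omega
  have hshift : ∑ k ∈ Icc (1 : ℤ) K, g (k + 1) = ∑ k ∈ Icc (1 + 1 : ℤ) (K + 1), g k := by
    rw [← map_add_right_Icc, sum_map]
    rfl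
  have hsplit : insert 1 (Icc (1 + 1 : ℤ) (K + 1)) = insert ((K : ℤ) + 1) (Icc 1 (K : ℤ)) := by
    rw [insert_Icc_add_one_left_eq_Icc hle, insert_Icc_right_eq_Icc_add_one hle]
  have hsum := congrArg (fun s => ∑ k ∈ s, g k) hsplit
  have hwrap : g ((K : ℤ) + 1) = g 1 := by rw [add_comm]; exact hg 1
  rw [sum_insert (by simp), sum_insert (by simp), hwrap] at hsum
  rw [hshift]
  exact add_left_cancel hsum

theorem sum_Icc_sub_eq_zero [AddCommGroup M] (hg : Periodic g K) :
    ∑ k ∈ Icc (1 : ℤ) K, (g (k + 1) - g k) = 0 := by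
  rw [sum_sub_distrib, hg.sum_Icc_comp_add_one, sub_self]

end Function.Periodic

theorem mul_add_mul_eq_of_sub_div_eq_average {a a' b b' Δx : ℝ} (hΔx : Δx ≠ 0)
    (h : (b' - b) / Δx = (a' + a) / 2) :
    a' * b' + a * b = (b' ^ 2 - b ^ 2) / Δx + Δx / 4 * (a' ^ 2 - a ^ 2) := by
  have hb' : b' = b + Δx / 2 * (a' + a) := by
    field_simp at h
    linarith
  subst hb'
  field_simp
  ring

theorem average_difference_orthogonality_general
    (K : ℕ) (Δx : ℝ) (hΔx : 0 < Δx)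
    (a b : ℤ → ℝ)
    (ha : ∀ k : ℤ, a (k + K) = a k) (hb : ∀ k : ℤ, b (k + K) = b k)
    (hscheme : ∀ k : ℤ, (b (k + 1) - b k) / Δx = (a (k + 1) + a k) / 2) :
    ∑ k ∈ Finset.Icc (1 : ℤ) K, a k * b k = 0 := by
  have ha' : Function.Periodic a K := ha
  have hb' : Function.Periodic b K := hb
  have hab : Function.Periodic (fun k => a k * b k) K := ha'.mul hb'
  have hasq : ∑ k ∈ Icc (1 : ℤ) K, (a (k + 1) ^ 2 - a k ^ 2) = 0 :=
    (ha'.comp (· ^ 2)).sum_Icc_sub_eq_zero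
  have hbsq : ∑ k ∈ Icc (1 : ℤ) K, (b (k + 1) ^ 2 - b k ^ 2) = 0 :=
    (hb'.comp (· ^ 2)).sum_Icc_sub_eq_zero
  have htwice : 2 * ∑ k ∈ Icc (1 : ℤ) K, a k * b k = 0 :=
    calc 2 * ∑ k ∈ Icc (1 : ℤ) K, a k * b k
        = ∑ k ∈ Icc (1 : ℤ) K, (a (k + 1) * b (k + 1) + a k * b k) := by
          rw [sum_add_distrib, hab.sum_Icc_comp_add_one, two_mul]
      _ = ∑ k ∈ Icc (1 : ℤ) K,
            ((b (k + 1) ^ 2 - b k ^ 2) / Δx + Δx / 4 * (a (k + 1) ^ 2 - a k ^ 2)) :=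
          sum_congr rfl fun k _ => mul_add_mul_eq_of_sub_div_eq_average hΔx.ne' (hscheme k)
      _ = (∑ k ∈ Icc (1 : ℤ) K, (b (k + 1) ^ 2 - b k ^ 2)) / Δx
            + Δx / 4 * ∑ k ∈ Icc (1 : ℤ) K, (a (k + 1) ^ 2 - a k ^ 2) := by
          rw [sum_add_distrib, sum_div, mul_sum]
      _ = 0 := by rw [hasq, hbsq, zero_div, mul_zero, add_zero]
  exact (mul_eq_zero.mp htwice).resolve_left two_ne_zero

theorem average_difference_orthogonality
    (K : ℕ) (hK : 1 ≤ K) (Δx : ℝ) (hΔx : 0 < Δx)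
    (a b : ℤ → ℝ)
    (ha : ∀ k : ℤ, a (k + K) = a k) (hb : ∀ k : ℤ, b (k + K) = b k)
    (hscheme : ∀ k : ℤ, (b (k + 1) - b k) / Δx = (a (k + 1) + a k) / 2) :
    ∑ k ∈ Finset.Icc (1 : ℤ) K, a k * b k = 0 :=
  average_difference_orthogonality_general K Δx hΔx a b ha hb hscheme
end

section
/- Let Δx > 0 and n ∈ ℤ with tan(nΔx/2) well-defined and nonzero (i.e., cos(nΔx/2) ≠ 0 and sin(nΔx/2) ≠ 0). Then u_k(t) = exp(i c t)·exp(i n k Δx) satisfies the average-difference semi-discrete scheme (u_{k+1}'(t) − u_k'(t))/Δx = (u_{k+1}(t) + u_k(t))/2 for all k and t if and only if c = −Δx/(2 tan(nΔx/2)). -/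
/-!
Every mode satisfies `u_{k+1} = e^{iθ} u_k` with `θ = nΔx` and `u_k' = i c u_k`, so after dividing
by `u_k ≠ 0` the scheme becomes the single symbol equation `i c (e^{iθ} - 1)/Δx = (e^{iθ} + 1)/2`.
The half-angle factorizations `e^{iθ} - 1 = 2i sin(θ/2) e^{iθ/2}` and
`e^{iθ} + 1 = 2 cos(θ/2) e^{iθ/2}` turn it into the real equation `-2c sin(θ/2)/Δx = cos(θ/2)`.
-/

open Complex

theorem deriv_cexp_mul_ofReal_mul_const (a C : ℂ) (t : ℝ) :
    deriv (fun s : ℝ => exp (a * s) * C) t = a * exp (a * t) * C := by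
  have h : HasDerivAt (fun s : ℝ => a * s) a t := by
    simpa using (ofRealCLM.hasDerivAt (x := t)).const_mul a
  rw [(h.cexp.mul_const C).deriv]
  ring

theorem exp_div_two_mul_I_sq (z : ℂ) : exp (z / 2 * I) ^ 2 = exp (z * I) := by
  rw [← exp_nat_mul]
  ring_nf

theorem exp_neg_div_two_mul_I_mul_exp (z : ℂ) : exp (-(z / 2) * I) * exp (z / 2 * I) = 1 := by
  rw [← exp_add, neg_mul, neg_add_cancel, exp_zero]

theorem exp_mul_I_sub_one (z : ℂ) :
    exp (z * I) - 1 = 2 * I * sin (z / 2) * exp (z / 2 * I) := by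
  rw [← exp_div_two_mul_I_sq]
  linear_combination (-I * exp (z / 2 * I)) * two_sin (z / 2) + exp_neg_div_two_mul_I_mul_exp z
    + (exp (z / 2 * I) ^ 2 - exp (z / 2 * I) * exp (-(z / 2) * I)) * I_sq

theorem exp_mul_I_add_one (z : ℂ) : exp (z * I) + 1 = 2 * cos (z / 2) * exp (z / 2 * I) := by
  rw [← exp_div_two_mul_I_sq]
  linear_combination -exp (z / 2 * I) * two_cos (z / 2) - exp_neg_div_two_mul_I_mul_exp z

/-- Where `cos x = 0`, Lean's `tan x` is `0`, and both sides say `c = 0`. -/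
theorem eq_neg_div_two_mul_tan_iff {Δx c x : ℝ} (hΔx : Δx ≠ 0) (hsin : Real.sin x ≠ 0) :
    c = -Δx / (2 * Real.tan x) ↔ -2 * c * Real.sin x / Δx = Real.cos x := by
  rw [Real.tan_eq_sin_div_cos, mul_div_assoc', div_div_eq_mul_div, eq_div_iff (by positivity),
    div_eq_iff hΔx]
  constructor <;> intro h <;> linarith

theorem average_difference_symbol_eq_iff {Δx θ : ℝ} (hΔx : Δx ≠ 0)
    (hsin : Real.sin (θ / 2) ≠ 0) (c : ℝ) :
    I * c * (exp (θ * I) - 1) / Δx = (exp (θ * I) + 1) / 2 ↔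
      c = -Δx / (2 * Real.tan (θ / 2)) := by
  have hdiff : I * c * (exp (θ * I) - 1) / Δx
      = ((-2 * c * Real.sin (θ / 2) / Δx : ℝ) : ℂ) * exp (θ / 2 * I) := by
    rw [exp_mul_I_sub_one]
    push_cast
    linear_combination (2 * c * sin (θ / 2) * exp (θ / 2 * I) / Δx) * I_sq
  have hmean : (exp (θ * I) + 1) / 2 = (Real.cos (θ / 2) : ℂ) * exp (θ / 2 * I) := by
    rw [exp_mul_I_add_one]
    push_cast
    ring
  rw [hdiff, hmean, mul_left_inj' (exp_ne_zero _), ofReal_inj,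
    eq_neg_div_two_mul_tan_iff hΔx hsin]

theorem average_difference_mode_iff (c Δx : ℝ) (n k : ℤ) (t : ℝ) :
    (deriv (fun s : ℝ => exp (I * c * s) * exp (I * n * (k + 1) * Δx)) t
        - deriv (fun s : ℝ => exp (I * c * s) * exp (I * n * k * Δx)) t) / Δx
      = (exp (I * c * t) * exp (I * n * (k + 1) * Δx)
          + exp (I * c * t) * exp (I * n * k * Δx)) / 2
    ↔ I * c * (exp ((n * Δx : ℝ) * I) - 1) / Δx = (exp ((n * Δx : ℝ) * I) + 1) / 2 := by
  have hshift :
      exp (I * n * (k + 1) * Δx) = exp (I * n * k * Δx) * exp ((n * Δx : ℝ) * I) := by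
    rw [← exp_add]
    push_cast
    ring_nf
  set A := exp (I * c * t) * exp (I * n * k * Δx)
  have hA : A ≠ 0 := mul_ne_zero (exp_ne_zero _) (exp_ne_zero _)
  rw [deriv_cexp_mul_ofReal_mul_const, deriv_cexp_mul_ofReal_mul_const, hshift]
  exact ⟨fun h => mul_left_cancel₀ hA (by linear_combination h),
    fun h => by linear_combination A * h⟩

theorem average_difference_phase_speed_general
    (Δx : ℝ) (hΔx : 0 < Δx) (n : ℤ)
    (hsin : Real.sin (n * Δx / 2) ≠ 0) (c : ℝ) :
    (∀ (k : ℤ) (t : ℝ),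
      (deriv (fun s : ℝ => Complex.exp (I * c * s) * Complex.exp (I * n * (k + 1) * Δx)) t
        - deriv (fun s : ℝ => Complex.exp (I * c * s) * Complex.exp (I * n * k * Δx)) t) / Δx
      = (Complex.exp (I * c * t) * Complex.exp (I * n * (k + 1) * Δx)
          + Complex.exp (I * c * t) * Complex.exp (I * n * k * Δx)) / 2)
    ↔ c = - Δx / (2 * Real.tan (n * Δx / 2)) := by
  simp only [average_difference_mode_iff, forall_const]
  exact average_difference_symbol_eq_iff hΔx.ne' hsin c

theorem average_difference_phase_speed
    (Δx : ℝ) (hΔx : 0 < Δx) (n : ℤ)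
    (hcos : Real.cos (n * Δx / 2) ≠ 0) (hsin : Real.sin (n * Δx / 2) ≠ 0) (c : ℝ) :
    (∀ (k : ℤ) (t : ℝ),
      (deriv (fun s : ℝ => Complex.exp (I * c * s) * Complex.exp (I * n * (k + 1) * Δx)) t
        - deriv (fun s : ℝ => Complex.exp (I * c * s) * Complex.exp (I * n * k * Δx)) t) / Δx
      = (Complex.exp (I * c * t) * Complex.exp (I * n * (k + 1) * Δx)
          + Complex.exp (I * c * t) * Complex.exp (I * n * k * Δx)) / 2)
    ↔ c = - Δx / (2 * Real.tan (n * Δx / 2)) :=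
  average_difference_phase_speed_general Δx hΔx n hsin c
end

section
/- For all θ ∈ (0, π), the average-difference phase speed error is smaller than the central-difference one: |θ/(2 tan(θ/2)) − 1| ≤ |θ/sin(θ) − 1|, where in both cases we compare the normalized phase speed to the exact value 1. -/
/-! With `x = θ / 2`, `s = sin x`, `c = cos x`, the two normalized phase speeds are
`x / (s c) ≥ 1` (as `sin x ≤ x`) and `x c / s ≤ 1` (as `x ≤ tan x`). They lie on opposite
sides of `1`, so the claim reduces to their sum being at least `2`, i.e. to
`2 s c ≤ x (1 + c²)`, which follows from `s ≤ x` and `2 c ≤ 1 + c²`. -/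

open Real

theorem two_mul_sin_mul_cos_le {x : ℝ} (hx : 0 ≤ x) (hc : 0 ≤ cos x) :
    2 * sin x * cos x ≤ x * (1 + cos x ^ 2) := by
  nlinarith [mul_nonneg (sub_nonneg.mpr (sin_le hx)) hc, mul_nonneg hx (sq_nonneg (1 - cos x))]

theorem one_le_div_sin {θ : ℝ} (h0 : 0 < θ) (hπ : θ < π) : 1 ≤ θ / sin θ := by
  rw [one_le_div (sin_pos_of_pos_of_lt_pi h0 hπ)]
  exact sin_le h0.le

theorem div_two_mul_tan_half_le_one {θ : ℝ} (h0 : 0 < θ) (hπ : θ < π) :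
    θ / (2 * tan (θ / 2)) ≤ 1 := by
  have htan : θ / 2 < tan (θ / 2) := lt_tan (by linarith) (by linarith)
  rw [div_le_one (by linarith)]
  linarith

theorem two_le_div_sin_add_div_two_mul_tan_half {θ : ℝ} (h0 : 0 < θ) (hπ : θ < π) :
    2 ≤ θ / sin θ + θ / (2 * tan (θ / 2)) := by
  obtain ⟨x, rfl⟩ : ∃ x, θ = 2 * x := ⟨θ / 2, by ring⟩
  have hs : 0 < sin x := sin_pos_of_pos_of_lt_pi (by linarith) (by linarith)
  have hc : 0 < cos x := cos_pos_of_mem_Ioo ⟨by linarith, by linarith⟩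
  have hsum : 2 * x / sin (2 * x) + 2 * x / (2 * tan (2 * x / 2))
      = x * (1 + cos x ^ 2) / (sin x * cos x) := by
    rw [mul_div_cancel_left₀ x two_ne_zero, sin_two_mul, tan_eq_sin_div_cos]
    field_simp
  rw [hsum, le_div_iff₀ (by positivity)]
  linarith [two_mul_sin_mul_cos_le (x := x) (by linarith) hc.le]

theorem average_difference_phase_error_le (θ : ℝ) (h0 : 0 < θ) (hπ : θ < Real.pi) :
    |θ / (2 * Real.tan (θ / 2)) - 1| ≤ |θ / Real.sin θ - 1| := by
  rw [abs_of_nonpos (sub_nonpos.mpr (div_two_mul_tan_half_le_one h0 hπ)),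
    abs_of_nonneg (sub_nonneg.mpr (one_le_div_sin h0 hπ))]
  linarith [two_le_div_sin_add_div_two_mul_tan_half h0 hπ]
end

section
/- Let G(u) = u²/2, so δG/δu = u. The implicit midpoint average-difference scheme (u^{m+1}_{k+1} − u^{m+1}_k − u^m_{k+1} + u^m_k)/(Δt Δx) = (u^{m+1}_{k+1} + u^{m+1}_k + u^m_{k+1} + u^m_k)/4 conserves the discrete energy: if u^m, u^{m+1} : ℤ → ℝ are K-periodic and satisfy the scheme for all k, then Σ_{k=1}^K (u^{m+1}_k)² = Σ_{k=1}^K (u^m_k)². -/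
/-!
Write `a = v - u` and `b = v + u`, so that `v² - u² = a b` and the scheme reads
`a (k+1) - a k = c (b (k+1) + b k)` with `c = Δt Δx / 4`. Multiplying the scheme by
`a (k+1) + a k`, respectively `b (k+1) - b k`, turns its right, respectively left, side into a
telescoping sum of `a²`, respectively `b²`, which vanishes over a period. Hence both
`∑ (a (k+1) + a k) (b (k+1) + b k)` and `∑ (a (k+1) - a k) (b (k+1) - b k)` vanish, and their sum
is `2 ∑ a (k+1) b (k+1) + 2 ∑ a k b k = 4 ∑ a k b k` by periodicity.
-/

open Finset Function

theorem Int.sum_Icc_one_sub {M : Type*} [AddCommGroup M] (f : ℤ → M) (n : ℕ) :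
    ∑ k ∈ Icc (1 : ℤ) n, (f (k + 1) - f k) = f (n + 1) - f 1 := by
  induction n with
  | zero => simp
  | succ n ih =>
    rw [Nat.cast_succ, ← insert_Icc_right_eq_Icc_add_one (by omega), sum_insert (by simp), ih]
    abel

theorem Function.Periodic.sum_Icc_one_sub_eq_zero {M : Type*} [AddCommGroup M] {f : ℤ → M}
    {K : ℕ} (hf : Periodic f K) : ∑ k ∈ Icc (1 : ℤ) K, (f (k + 1) - f k) = 0 := by
  rw [Int.sum_Icc_one_sub, add_comm, hf, sub_self]

theorem Function.Periodic.sum_Icc_mul_eq_zero_of_sub_eq_mul_add {𝕜 : Type*} [Field 𝕜]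
    [CharZero 𝕜] {a b : ℤ → 𝕜} {K : ℕ} (ha : Periodic a K) (hb : Periodic b K) {c : 𝕜}
    (hc : c ≠ 0) (hab : ∀ k, a (k + 1) - a k = c * (b (k + 1) + b k)) :
    ∑ k ∈ Icc (1 : ℤ) K, a k * b k = 0 := by
  have sum_avg_mul_avg : ∑ k ∈ Icc (1 : ℤ) K, (a (k + 1) + a k) * (b (k + 1) + b k) = 0 := by
    refine (mul_eq_zero.mp ?_).resolve_left hc
    rw [mul_sum, ← (ha.mul ha).sum_Icc_one_sub_eq_zero]
    refine sum_congr rfl fun k _ ↦ ?_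
    simp only [Pi.mul_apply]
    linear_combination -(a (k + 1) + a k) * hab k
  have sum_diff_mul_diff : ∑ k ∈ Icc (1 : ℤ) K, (a (k + 1) - a k) * (b (k + 1) - b k) = 0 := by
    rw [← mul_zero c, ← (hb.mul hb).sum_Icc_one_sub_eq_zero, mul_sum]
    refine sum_congr rfl fun k _ ↦ ?_
    simp only [Pi.mul_apply]
    linear_combination (b (k + 1) - b k) * hab k
  have four_mul : ∑ k ∈ Icc (1 : ℤ) K, 4 * (a k * b k) =
      ∑ k ∈ Icc (1 : ℤ) K, ((a (k + 1) + a k) * (b (k + 1) + b k)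
        + (a (k + 1) - a k) * (b (k + 1) - b k) - 2 * ((a * b) (k + 1) - (a * b) k)) :=
    sum_congr rfl fun k _ ↦ by simp only [Pi.mul_apply]; ring
  rw [sum_sub_distrib, sum_add_distrib, ← mul_sum, ← mul_sum, sum_avg_mul_avg, sum_diff_mul_diff,
    (ha.mul hb).sum_Icc_one_sub_eq_zero] at four_mul
  simpa using four_mul

theorem average_difference_scheme_conserves_energy_general
    (K : ℕ) (Δt Δx : ℝ) (hΔt : 0 < Δt) (hΔx : 0 < Δx)
    (u v : ℤ → ℝ)
    (hu : ∀ k : ℤ, u (k + K) = u k) (hv : ∀ k : ℤ, v (k + K) = v k)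
    (hscheme : ∀ k : ℤ,
      (v (k + 1) - v k - u (k + 1) + u k) / (Δt * Δx)
        = (v (k + 1) + v k + u (k + 1) + u k) / 4) :
    ∑ k ∈ Finset.Icc (1 : ℤ) K, (v k) ^ 2 = ∑ k ∈ Finset.Icc (1 : ℤ) K, (u k) ^ 2 := by
  have hc : Δt * Δx / 4 ≠ 0 := by positivity
  have scheme_sub_add (k : ℤ) :
      (v - u) (k + 1) - (v - u) k = Δt * Δx / 4 * ((v + u) (k + 1) + (v + u) k) := by
    have := hscheme k
    field_simp at this
    simp only [Pi.sub_apply, Pi.add_apply]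
    linarith
  have sum_sub_mul_add :=
    (Periodic.sub hv hu).sum_Icc_mul_eq_zero_of_sub_eq_mul_add (Periodic.add hv hu) hc scheme_sub_add
  rw [← sub_eq_zero, ← sum_sub_distrib, ← sum_sub_mul_add]
  exact sum_congr rfl fun k _ ↦ by simp only [Pi.sub_apply, Pi.add_apply]; ring

theorem average_difference_scheme_conserves_energy
    (K : ℕ) (hK : 1 ≤ K) (Δt Δx : ℝ) (hΔt : 0 < Δt) (hΔx : 0 < Δx)
    (u v : ℤ → ℝ)
    (hu : ∀ k : ℤ, u (k + K) = u k) (hv : ∀ k : ℤ, v (k + K) = v k)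
    (hscheme : ∀ k : ℤ,
      (v (k + 1) - v k - u (k + 1) + u k) / (Δt * Δx)
        = (v (k + 1) + v k + u (k + 1) + u k) / 4) :
    ∑ k ∈ Finset.Icc (1 : ℤ) K, (v k) ^ 2 = ∑ k ∈ Finset.Icc (1 : ℤ) K, (u k) ^ 2 :=
  average_difference_scheme_conserves_energy_general K Δt Δx hΔt hΔx u v hu hv hscheme
end

section
/- Let G(u) = u²/2. The implicit midpoint central difference scheme (u^{m+1}_{k+1} − u^{m+1}_{k−1} − u^m_{k+1} + u^m_{k−1})/(2Δt Δx) = (u^{m+1}_k + u^m_k)/2 conserves the discrete energy: if u^m, u^{m+1} : ℤ → ℝ are K-periodic and satisfy the scheme for all k, then Σ_{k=1}^K (u^{m+1}_k)² = Σ_{k=1}^K (u^m_k)². -/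
/-!
Multiplying the scheme at `k` by `v k - u k` gives the local energy balance
`v k ^ 2 - u k ^ 2 = (F k - F (k - 1)) / (Δt * Δx)` with the flux
`F k = (v k - u k) * (v (k + 1) - u (k + 1))`. The flux is `K`-periodic, so summed over one
period the right-hand side telescopes to zero.
-/

open Finset

theorem sum_Icc_one_sub_pred {M : Type*} [AddCommGroup M] (f : ℤ → M) (n : ℕ) :
    ∑ k ∈ Icc (1 : ℤ) n, (f k - f (k - 1)) = f n - f 0 := by
  induction n with
  | zero => simp
  | succ n ih =>
    rw [Nat.cast_succ, ← insert_Icc_right_eq_Icc_add_one (by omega), sum_insert (by simp), ih]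
    simp only [add_sub_cancel_right]
    abel

theorem Function.Periodic.sum_Icc_one_sub_pred_eq_zero {M : Type*} [AddCommGroup M] {f : ℤ → M}
    {n : ℕ} (hf : Function.Periodic f n) :
    ∑ k ∈ Icc (1 : ℤ) n, (f k - f (k - 1)) = 0 := by
  rw [sum_Icc_one_sub_pred, ← zero_add (n : ℤ), hf, sub_self]

def energyFlux (u v : ℤ → ℝ) (k : ℤ) : ℝ :=
  (v k - u k) * (v (k + 1) - u (k + 1))

theorem Function.Periodic.energyFlux {u v : ℤ → ℝ} {n : ℤ} (hu : Function.Periodic u n)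
    (hv : Function.Periodic v n) : Function.Periodic (energyFlux u v) n := by
  intro k
  simp only [_root_.energyFlux, add_right_comm k n 1, hu _, hv _]

theorem sq_sub_sq_eq_energyFlux_sub {u v : ℤ → ℝ} {Δt Δx : ℝ} {k : ℤ}
    (hscheme : (v (k + 1) - v (k - 1) - u (k + 1) + u (k - 1)) / (2 * Δt * Δx)
      = (v k + u k) / 2) :
    v k ^ 2 - u k ^ 2 = (energyFlux u v k - energyFlux u v (k - 1)) / (Δt * Δx) := by
  have hsum : v k + u k = ((v (k + 1) - u (k + 1)) - (v (k - 1) - u (k - 1))) / (Δt * Δx) := by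
    rw [← div_left_inj' (two_ne_zero' ℝ), ← hscheme]
    field_simp
    ring
  calc v k ^ 2 - u k ^ 2 = (v k - u k) * (v k + u k) := by ring
    _ = _ := by rw [hsum, energyFlux, energyFlux, sub_add_cancel]; ring

theorem central_difference_scheme_conserves_energy_general
    (K : ℕ) (Δt Δx : ℝ)
    (u v : ℤ → ℝ)
    (hu : ∀ k : ℤ, u (k + K) = u k) (hv : ∀ k : ℤ, v (k + K) = v k)
    (hscheme : ∀ k : ℤ,
      (v (k + 1) - v (k - 1) - u (k + 1) + u (k - 1)) / (2 * Δt * Δx)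
        = (v k + u k) / 2) :
    ∑ k ∈ Finset.Icc (1 : ℤ) K, (v k) ^ 2 = ∑ k ∈ Finset.Icc (1 : ℤ) K, (u k) ^ 2 := by
  rw [← sub_eq_zero, ← sum_sub_distrib]
  calc ∑ k ∈ Icc (1 : ℤ) K, (v k ^ 2 - u k ^ 2)
      = (∑ k ∈ Icc (1 : ℤ) K, (energyFlux u v k - energyFlux u v (k - 1))) / (Δt * Δx) := by
        rw [sum_div]
        exact sum_congr rfl fun k _ => sq_sub_sq_eq_energyFlux_sub (hscheme k)
    _ = 0 := by
        rw [(Function.Periodic.energyFlux hu hv).sum_Icc_one_sub_pred_eq_zero, zero_div]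

theorem central_difference_scheme_conserves_energy
    (K : ℕ) (hK : 1 ≤ K) (Δt Δx : ℝ) (hΔt : 0 < Δt) (hΔx : 0 < Δx)
    (u v : ℤ → ℝ)
    (hu : ∀ k : ℤ, u (k + K) = u k) (hv : ∀ k : ℤ, v (k + K) = v k)
    (hscheme : ∀ k : ℤ,
      (v (k + 1) - v (k - 1) - u (k + 1) + u (k - 1)) / (2 * Δt * Δx)
        = (v k + u k) / 2) :
    ∑ k ∈ Finset.Icc (1 : ℤ) K, (v k) ^ 2 = ∑ k ∈ Finset.Icc (1 : ℤ) K, (u k) ^ 2 :=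
  central_difference_scheme_conserves_energy_general K Δt Δx u v hu hv hscheme
end
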